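/- arXiv:1508.01655 — 7 statements merged into one kernel-verified Lean document; each statement's English description precedes it below -/
import Mathlib

section
/- For every integer k ≥ 0, the integral over [0, 2π] of e^{iky} / ((1+r²) + (r²−1)cos(y)) dy equals (π/r)·((1−r)/(1+r))^k, for any real r with 0 < r < 1. -/
open Real Complex intervalIntegral

/-!
On the unit circle `z = e^{iy}` the denominator factors as
`(1 + r²) + (r² - 1) cos y = (r² - 1) (z - a) (z - b) / (2z)` with `a = (1 - r)/(1 + r)` inside
the disc and `b = 1/a` outside it, so the integral is the contour integral of
`2i/(1 - r²) · z^k / ((z - a)(z - b))` over the unit circle. By Cauchy's integral formula it equals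
`2πi · 2i/(1 - r²) · a^k/(a - b)`, and `a - b = -4r/(1 - r²)`.
-/

open Metric in
theorem circleIntegral_div_sub_mul_sub {f : ℂ → ℂ} {c a b : ℂ} {R : ℝ}
    (hf : DifferentiableOn ℂ f (closedBall c R)) (ha : a ∈ ball c R) (hb : b ∉ closedBall c R) :
    (∮ z in C(c, R), f z / ((z - a) * (z - b))) = 2 * π * I * (f a / (a - b)) := by
  have hg : DifferentiableOn ℂ (fun z => f z / (z - b)) (closedBall c R) :=
    hf.div (differentiableOn_id.sub_const b) fun z hz =>
      sub_ne_zero.2 (ne_of_mem_of_not_mem hz hb)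
  rw [← smul_eq_mul, ← hg.circleIntegral_sub_inv_smul ha]
  congr 1 with z
  simp only [smul_eq_mul, div_eq_mul_inv, mul_inv]
  ring

theorem two_mul_circleMap_mul_cos (y : ℝ) :
    2 * circleMap 0 1 y * Complex.cos y = circleMap 0 1 y ^ 2 + 1 := by
  have h : exp (y * I) * exp (-y * I) = 1 := by
    rw [← Complex.exp_add, neg_mul, add_neg_cancel, Complex.exp_zero]
  rw [Complex.cos, circleMap_zero, ofReal_one, one_mul]
  linear_combination h

theorem circleMap_sub_mul_circleMap_sub {r : ℝ} (hr : r ≠ 1) (hr' : r ≠ -1) (y : ℝ) :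
    (circleMap 0 1 y - (1 - r) / (1 + r)) * (circleMap 0 1 y - (1 + r) / (1 - r))
      = 2 * circleMap 0 1 y * (((1 + r ^ 2) + (r ^ 2 - 1) * Real.cos y : ℝ) : ℂ) / (r ^ 2 - 1) := by
  have h1 : (1 + r : ℂ) ≠ 0 := by exact_mod_cast (show 1 + r ≠ 0 by contrapose! hr'; linarith)
  have h2 : (1 - r : ℂ) ≠ 0 := by exact_mod_cast sub_ne_zero.2 (Ne.symm hr)
  have h3 : (r ^ 2 - 1 : ℂ) ≠ 0 := by
    rw [show (r ^ 2 - 1 : ℂ) = -((1 - r) * (1 + r)) by ring]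
    exact neg_ne_zero.2 (mul_ne_zero h2 h1)
  field_simp
  push_cast
  linear_combination (r ^ 2 - 1) ^ 2 * two_mul_circleMap_mul_cos y

theorem one_add_sq_add_sq_sub_one_mul_cos_pos {r : ℝ} (hr : r ≠ 0) (y : ℝ) :
    0 < (1 + r ^ 2) + (r ^ 2 - 1) * Real.cos y := by
  have := sq_pos_of_ne_zero hr
  rcases le_total (r ^ 2) 1 with h | h
  · nlinarith [mul_nonneg (sub_nonneg.2 h) (sub_nonneg.2 (Real.cos_le_one y))]
  · nlinarith [mul_nonneg (sub_nonneg.2 h) (neg_le_iff_add_nonneg'.1 (Real.neg_one_le_cos y))]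

theorem exp_div_kernel_eq_deriv_circleMap_smul {r : ℝ} (hr0 : r ≠ 0) (hr1 : r ≠ 1)
    (hr1' : r ≠ -1) (k : ℕ) (y : ℝ) :
    cexp (I * k * y) / (((1 + r ^ 2) + (r ^ 2 - 1) * Real.cos y : ℝ) : ℂ)
      = deriv (circleMap 0 1) y • (2 * I / (1 - r ^ 2) * (circleMap 0 1 y ^ k /
          ((circleMap 0 1 y - (1 - r) / (1 + r)) * (circleMap 0 1 y - (1 + r) / (1 - r))))) := by
  have hD : (((1 + r ^ 2) + (r ^ 2 - 1) * Real.cos y : ℝ) : ℂ) ≠ 0 :=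
    ofReal_ne_zero.2 (one_add_sq_add_sq_sub_one_mul_cos_pos hr0 y).ne'
  have hr2 : (1 - r ^ 2 : ℂ) ≠ 0 := by
    rw [show (1 - r ^ 2 : ℂ) = (1 - r) * (1 + r) by ring]
    exact mul_ne_zero (by exact_mod_cast sub_ne_zero.2 (Ne.symm hr1))
      (by exact_mod_cast (show 1 + r ≠ 0 by contrapose! hr1'; linarith))
  have hz : cexp (y * I) ≠ 0 := Complex.exp_ne_zero _
  rw [deriv_circleMap, smul_eq_mul, circleMap_sub_mul_circleMap_sub hr1 hr1',
    circleMap_zero, ofReal_one, one_mul, ← Complex.exp_nat_mul]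
  field_simp
  linear_combination (1 - (r : ℂ) ^ 2) * I_sq

theorem one_sub_div_one_add_mem_ball {r : ℝ} (hr : 0 < r) :
    ((1 - r) / (1 + r) : ℂ) ∈ Metric.ball 0 1 := by
  have h : 0 < 1 + r := by linarith
  rw [mem_ball_zero_iff]
  norm_cast
  rw [norm_div, Real.norm_eq_abs, Real.norm_eq_abs, abs_of_pos h, div_lt_one h]
  exact abs_sub_lt_iff.2 ⟨by linarith, by linarith⟩

theorem one_add_div_one_sub_notMem_closedBall {r : ℝ} (hr0 : 0 < r) (hr1 : r < 1) :
    ((1 + r) / (1 - r) : ℂ) ∉ Metric.closedBall 0 1 := by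
  have h : 0 < 1 - r := by linarith
  rw [mem_closedBall_zero_iff, not_le]
  norm_cast
  rw [norm_div, Real.norm_eq_abs, Real.norm_eq_abs, abs_of_pos h, abs_of_pos (by linarith),
    one_lt_div h]
  linarith

theorem integral_exp_over_kernel (r : ℝ) (hr0 : 0 < r) (hr1 : r < 1) (k : ℕ) :
    ∫ y in (0:ℝ)..(2 * π),
      Complex.exp (Complex.I * k * y) / (((1 + r ^ 2) + (r ^ 2 - 1) * Real.cos y : ℝ) : ℂ)
      = ((π / r * ((1 - r) / (1 + r)) ^ k : ℝ) : ℂ) := by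
  have h1 : 0 < 1 + r := by linarith
  have h2 : 0 < 1 - r := by linarith
  calc _ = ∮ z in C(0, 1), 2 * I / (1 - r ^ 2) *
        (z ^ k / ((z - (1 - r) / (1 + r)) * (z - (1 + r) / (1 - r)))) :=
        integral_congr fun y _ =>
          exp_div_kernel_eq_deriv_circleMap_smul hr0.ne' hr1.ne (by linarith) k y
    _ = 2 * I / (1 - r ^ 2) * (2 * π * I *
        (((1 - r) / (1 + r)) ^ k / ((1 - r) / (1 + r) - (1 + r) / (1 - r)))) := by
        rw [circleIntegral.integral_const_mul,
          circleIntegral_div_sub_mul_sub (differentiable_pow k).differentiableOn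
            (one_sub_div_one_add_mem_ball hr0) (one_add_div_one_sub_notMem_closedBall hr0 hr1)]
    _ = _ := by
        have : (1 - r ^ 2 : ℂ) ≠ 0 := by exact_mod_cast (show 1 - r ^ 2 ≠ 0 by nlinarith)
        have : (1 + r : ℂ) ≠ 0 := by exact_mod_cast h1.ne'
        have : (1 - r : ℂ) ≠ 0 := by exact_mod_cast h2.ne'
        have : (r : ℂ) ≠ 0 := by exact_mod_cast hr0.ne'
        rw [show ((1 - r) / (1 + r) - (1 + r) / (1 - r) : ℂ) = -4 * r / (1 - r ^ 2) by
          field_simp; ring]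
        push_cast
        field_simp
        linear_combination -4 * I_sq
end

section
/- For every integer k, the integral over [0, 2π] of cos(ky) / ((1+r²) + (r²−1)cos(y)) dy equals (π/r)·((1−r)/(1+r))^{|k|}, and the integral of sin(ky) / ((1+r²) + (r²−1)cos(y)) dy equals 0, for any real r with 0 < r < 1. -/
/-!
With `ρ = (1 - r) / (1 + r)`, the integrand's denominator is `2r` divided by the Poisson kernel of
the unit disc at the point `ρ`. The Poisson integral formula for the entire function `z ^ n`
computes the Fourier coefficients of that kernel: `2π ρ ^ |k|` against `cos (k y)` and `0`
against `sin (k y)`.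
-/

open Real

lemma poissonKernel_zero_ofReal_circleMap (ρ θ : ℝ) :
    poissonKernel 0 ρ (circleMap 0 1 θ) = (1 - ρ ^ 2) / (1 - 2 * ρ * cos θ + ρ ^ 2) := by
  have hnorm : ‖circleMap 0 1 θ - ρ‖ ^ 2 = 1 - 2 * ρ * cos θ + ρ ^ 2 := by
    rw [Complex.sq_norm, Complex.normSq_apply]
    simp only [circleMap, Complex.ofReal_one, one_mul, zero_add, Complex.sub_re,
      Complex.exp_ofReal_mul_I_re, Complex.ofReal_re, Complex.sub_im, Complex.exp_ofReal_mul_I_im,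
      Complex.ofReal_im, sub_zero]
    nlinarith [sin_sq_add_cos_sq θ]
  simp [poissonKernel, hnorm]

lemma one_sub_two_mul_cos_add_sq_pos {ρ : ℝ} (hρ : |ρ| < 1) (θ : ℝ) :
    0 < 1 - 2 * ρ * cos θ + ρ ^ 2 := by
  obtain ⟨hρ₁, hρ₂⟩ := abs_lt.mp hρ
  -- `2 (1 - 2ρ cos θ + ρ²) = (1 - ρ)² (1 + cos θ) + (1 + ρ)² (1 - cos θ)`
  nlinarith [mul_nonneg (sq_nonneg (1 - ρ)) (by linarith [neg_one_le_cos θ] : 0 ≤ 1 + cos θ),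
    mul_nonneg (sq_nonneg (1 + ρ)) (by linarith [cos_le_one θ] : 0 ≤ 1 - cos θ),
    mul_pos (by linarith : (0:ℝ) < 1 - ρ) (by linarith : (0:ℝ) < 1 + ρ)]

lemma continuous_poissonKernel_zero_ofReal_circleMap {ρ : ℝ} (hρ : |ρ| < 1) :
    Continuous fun θ => poissonKernel 0 ρ (circleMap 0 1 θ) := by
  simp_rw [poissonKernel_zero_ofReal_circleMap]
  exact continuous_const.div (by fun_prop) fun θ => (one_sub_two_mul_cos_add_sq_pos hρ θ).ne'

lemma integral_poissonKernel_smul_circleMap_pow {w : ℂ} (hw : ‖w‖ < 1) (n : ℕ) :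
    ∫ θ in 0..2 * π, poissonKernel 0 w (circleMap 0 1 θ) • circleMap 0 1 θ ^ n
      = 2 * π * w ^ n := by
  have h := (differentiable_pow n).diffContOnCl.circleAverage_poissonKernel_smul
    (mem_ball_zero_iff.mpr hw)
  rw [Real.circleAverage_def, inv_smul_eq_iff₀ (by positivity)] at h
  simpa [Complex.real_smul] using h

lemma integral_poissonKernel_mul_cos_sin_nat {ρ : ℝ} (hρ : |ρ| < 1) (n : ℕ) :
    (∫ θ in 0..2 * π, poissonKernel 0 ρ (circleMap 0 1 θ) * cos (n * θ) = 2 * π * ρ ^ n) ∧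
    ∫ θ in 0..2 * π, poissonKernel 0 ρ (circleMap 0 1 θ) * sin (n * θ) = 0 := by
  have hint : IntervalIntegrable (fun θ => poissonKernel 0 ρ (circleMap 0 1 θ) • circleMap 0 1 θ ^ n)
      MeasureTheory.volume 0 (2 * π) :=
    ((continuous_poissonKernel_zero_ofReal_circleMap hρ).smul (by fun_prop)).intervalIntegrable _ _
  have h := integral_poissonKernel_smul_circleMap_pow (w := ρ) (by simpa using hρ) n
  have hpow (θ : ℝ) : circleMap 0 1 θ ^ n = Complex.exp ((n * θ : ℝ) * Complex.I) := by
    simp only [circleMap, Complex.ofReal_one, one_mul, zero_add, ← Complex.exp_nat_mul,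
      Complex.ofReal_mul, Complex.ofReal_natCast]
    ring_nf
  constructor
  · have hre := intervalIntegral.intervalIntegral_re hint
    rw [h] at hre
    simp only [RCLike.re_to_complex, hpow, Complex.real_smul, Complex.re_ofReal_mul,
      Complex.exp_ofReal_mul_I_re] at hre
    rw [hre]
    norm_cast
  · have him := intervalIntegral.intervalIntegral_im hint
    rw [h] at him
    simp only [RCLike.im_to_complex, hpow, Complex.real_smul, Complex.im_ofReal_mul,
      Complex.exp_ofReal_mul_I_im] at him
    rw [him]
    norm_cast

lemma integral_poissonKernel_mul_cos_sin {ρ : ℝ} (hρ : |ρ| < 1) (k : ℤ) :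
    (∫ θ in 0..2 * π, poissonKernel 0 ρ (circleMap 0 1 θ) * cos (k * θ)
      = 2 * π * ρ ^ k.natAbs) ∧
    ∫ θ in 0..2 * π, poissonKernel 0 ρ (circleMap 0 1 θ) * sin (k * θ) = 0 := by
  obtain ⟨n, rfl | rfl⟩ := Int.eq_nat_or_neg k
  · simpa using integral_poissonKernel_mul_cos_sin_nat hρ n
  · simpa [neg_mul, cos_neg, sin_neg] using integral_poissonKernel_mul_cos_sin_nat hρ n

lemma abs_one_sub_div_one_add_lt_one {r : ℝ} (hr : 0 < r) : |(1 - r) / (1 + r)| < 1 := by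
  rw [abs_div, abs_of_pos (by linarith : 0 < 1 + r), div_lt_one (by linarith), abs_lt]
  constructor <;> linarith

lemma poissonKernel_zero_one_sub_div_one_add {r : ℝ} (hr : 0 < r) (y : ℝ) :
    poissonKernel 0 ((1 - r) / (1 + r) : ℝ) (circleMap 0 1 y)
      = 2 * r / ((1 + r ^ 2) + (r ^ 2 - 1) * cos y) := by
  have hD : 0 < (1 + r ^ 2) + (r ^ 2 - 1) * cos y := by
    -- it equals `r² (1 + cos y) + (1 - cos y)`
    nlinarith [mul_nonneg (sq_nonneg r) (by linarith [neg_one_le_cos y] : 0 ≤ 1 + cos y),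
      cos_le_one y, mul_pos hr hr]
  have hden := one_sub_two_mul_cos_add_sq_pos (abs_one_sub_div_one_add_lt_one hr) y
  rw [poissonKernel_zero_ofReal_circleMap, div_eq_div_iff hden.ne' hD.ne']
  field_simp
  ring

theorem integral_cos_sin_over_kernel_general (r : ℝ) (hr0 : 0 < r) (k : ℤ) :
    (∫ y in (0:ℝ)..(2 * π),
        Real.cos (k * y) / ((1 + r ^ 2) + (r ^ 2 - 1) * Real.cos y)
      = π / r * ((1 - r) / (1 + r)) ^ k.natAbs) ∧
    (∫ y in (0:ℝ)..(2 * π),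
        Real.sin (k * y) / ((1 + r ^ 2) + (r ^ 2 - 1) * Real.cos y) = 0) := by
  have hkernel (f : ℝ → ℝ) : ∫ y in 0..2 * π, f y / ((1 + r ^ 2) + (r ^ 2 - 1) * cos y)
      = (∫ y in 0..2 * π, poissonKernel 0 ((1 - r) / (1 + r) : ℝ) (circleMap 0 1 y) * f y)
        / (2 * r) := by
    rw [← intervalIntegral.integral_div]
    congr with y
    rw [poissonKernel_zero_one_sub_div_one_add hr0]
    field_simp
  obtain ⟨hcos, hsin⟩ :=
    integral_poissonKernel_mul_cos_sin (abs_one_sub_div_one_add_lt_one hr0) k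
  refine ⟨?_, ?_⟩
  · rw [hkernel, hcos]
    field_simp
  · rw [hkernel, hsin, zero_div]

theorem integral_cos_sin_over_kernel (r : ℝ) (hr0 : 0 < r) (hr1 : r < 1) (k : ℤ) :
    (∫ y in (0:ℝ)..(2 * π),
        Real.cos (k * y) / ((1 + r ^ 2) + (r ^ 2 - 1) * Real.cos y)
      = π / r * ((1 - r) / (1 + r)) ^ k.natAbs) ∧
    (∫ y in (0:ℝ)..(2 * π),
        Real.sin (k * y) / ((1 + r ^ 2) + (r ^ 2 - 1) * Real.cos y) = 0) :=
  integral_cos_sin_over_kernel_general r hr0 k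
end

section
/- For real 0 < r < 1, the integral over [0, 2π] of log((1+r²)/(1−r²) − cos(y)) dy equals −2π·log(2(1−r)/(1+r)). -/
/-!
With `t = (1 - r) / (1 + r)` the argument of the logarithm is `|e^{iy} - t|² / (2t)`, so the
integral is `2π` times twice the circle average of `log |z - t|` over the unit circle, minus
`2π log (2t)`. That circle average is `log⁺ |t| = 0` by the mean value property of the harmonic
function `log |1 - t z|` (Jensen's formula).
-/

open Real

theorem norm_circleMap_zero_one_sub_ofReal_sq (t θ : ℝ) :
    ‖circleMap 0 1 θ - t‖ ^ 2 = 1 - 2 * t * cos θ + t ^ 2 := by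
  rw [← Complex.normSq_eq_norm_sq, Complex.normSq_apply]
  simp only [circleMap, Complex.ofReal_one, one_mul, zero_add, Complex.sub_re, Complex.sub_im,
    Complex.exp_ofReal_mul_I_re, Complex.exp_ofReal_mul_I_im, Complex.ofReal_re, Complex.ofReal_im,
    sub_zero]
  nlinarith [sin_sq_add_cos_sq θ]

theorem integral_log_one_sub_two_mul_cos_add_sq (t : ℝ) :
    ∫ θ in 0..2 * π, log (1 - 2 * t * cos θ + t ^ 2) = 4 * π * log⁺ |t| := by
  calc ∫ θ in 0..2 * π, log (1 - 2 * t * cos θ + t ^ 2)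
      = ∫ θ in 0..2 * π, 2 * log ‖circleMap 0 1 θ - t‖ := by
        simp_rw [← norm_circleMap_zero_one_sub_ofReal_sq, log_pow, Nat.cast_ofNat]
    _ = 2 * (2 * π) * circleAverage (log ‖· - (t : ℂ)‖) 0 1 := by
        rw [intervalIntegral.integral_const_mul, circleAverage_def, smul_eq_mul]
        field_simp
    _ = 4 * π * log⁺ |t| := by
        rw [circleAverage_log_norm_sub_const_eq_posLog, Complex.norm_real, norm_eq_abs]
        ring

theorem integral_log_one_add_sq_div_two_mul_sub_cos {t : ℝ} (ht0 : 0 < t) (ht1 : t < 1) :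
    ∫ y in 0..2 * π, log ((1 + t ^ 2) / (2 * t) - cos y) = -(2 * π) * log (2 * t) := by
  have hq_pos (y : ℝ) : 0 < 1 - 2 * t * cos y + t ^ 2 := by
    nlinarith [cos_le_one y, sq_nonneg (1 - t)]
  have hq_int : IntervalIntegrable (fun y ↦ log (1 - 2 * t * cos y + t ^ 2)) MeasureTheory.volume
      0 (2 * π) :=
    (Continuous.log (by fun_prop) fun y ↦ (hq_pos y).ne').intervalIntegrable _ _
  have hkernel (y : ℝ) :
      (1 + t ^ 2) / (2 * t) - cos y = (1 - 2 * t * cos y + t ^ 2) / (2 * t) := by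
    field_simp
    ring
  simp_rw [hkernel, log_div (hq_pos _).ne' (by positivity : 2 * t ≠ 0)]
  rw [intervalIntegral.integral_sub hq_int intervalIntegrable_const,
    integral_log_one_sub_two_mul_cos_add_sq,
    (posLog_eq_zero_iff |t|).2 (by rw [abs_abs, abs_of_pos ht0]; exact ht1.le),
    intervalIntegral.integral_const, smul_eq_mul]
  ring

theorem integral_log_kernel (r : ℝ) (hr0 : 0 < r) (hr1 : r < 1) :
    ∫ y in (0:ℝ)..(2 * π), Real.log ((1 + r ^ 2) / (1 - r ^ 2) - Real.cos y)
      = -(2 * π) * Real.log (2 * (1 - r) / (1 + r)) := by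
  set t := (1 - r) / (1 + r) with ht
  have ht0 : 0 < t := by positivity [show 0 < 1 - r by linarith]
  have ht1 : t < 1 := by rw [ht, div_lt_one (by linarith)]; linarith
  have hr : (1 + r ^ 2) / (1 - r ^ 2) = (1 + t ^ 2) / (2 * t) := by
    have : 1 - r ≠ 0 := by linarith
    have : 1 - r ^ 2 ≠ 0 := by nlinarith
    rw [ht]
    field_simp
    ring
  rw [hr, mul_div_assoc, integral_log_one_add_sq_div_two_mul_sub_cos ht0 ht1]
end

section
/- For real 0 < r < 1, the integral over [0, 2π] of log((1+r²) + (r²−1)cos(y))·cos(y) dy equals −2π·(1−r)/(1+r). -/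
/-!
With `c = -(1 + r) / (1 - r)` the integrand is `log (k * (1 + c² + 2c cos y)) * cos y` for a
constant `k > 0`, and `1 + c² + 2c cos y = |c + e^{iy}|²` never vanishes because `|c| > 1`.
The constant `log k` integrates to zero against `cos`. Writing `P y = 1 + c² + 2c cos y`,
integration by parts turns `log P * cos` into `2c sin² / P`, and
`2c² sin² y = P y (1 - c cos y) - (1 - c²)(1 + c cos y)`, where `(1 + c cos y) / P y` is the
derivative of `arctan (sin y / (c + cos y))`. This gives the antiderivative
`sin y * log (P y) + (y - c sin y - (1 - c²) arctan (sin y / (c + cos y))) / c`,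
which is smooth on all of `ℝ` (again because `|c| > 1`) and gains `2π / c` over a period.
-/

open Real

section CosKernel

variable {c : ℝ}

lemma one_add_sq_add_two_mul_cos_eq (c y : ℝ) :
    1 + c ^ 2 + 2 * c * cos y = (c + cos y) ^ 2 + sin y ^ 2 := by
  linear_combination -(sin_sq_add_cos_sq y)

lemma add_cos_ne_zero (hc : 1 < |c|) (y : ℝ) : c + cos y ≠ 0 := by
  intro h
  have : |c| = |cos y| := by rw [eq_neg_of_add_eq_zero_left h, abs_neg]
  linarith [abs_cos_le_one y]

lemma one_add_sq_add_two_mul_cos_pos (hc : 1 < |c|) (y : ℝ) :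
    0 < 1 + c ^ 2 + 2 * c * cos y := by
  rw [one_add_sq_add_two_mul_cos_eq]
  exact add_pos_of_pos_of_nonneg (pow_two_pos_of_ne_zero (add_cos_ne_zero hc y)) (sq_nonneg _)

lemma hasDerivAt_arctan_sin_div_add_cos (hc : 1 < |c|) (y : ℝ) :
    HasDerivAt (fun y => arctan (sin y / (c + cos y)))
      ((1 + c * cos y) / (1 + c ^ 2 + 2 * c * cos y)) y := by
  have hd := add_cos_ne_zero hc y
  refine ((hasDerivAt_sin y).div ((hasDerivAt_cos y).const_add c) hd).arctan.congr_deriv ?_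
  rw [one_add_sq_add_two_mul_cos_eq, Pi.div_apply]
  field_simp
  linear_combination sin_sq_add_cos_sq y

lemma hasDerivAt_log_one_add_sq_add_two_mul_cos_mul_cos (hc : 1 < |c|) (y : ℝ) :
    HasDerivAt (fun y => sin y * log (1 + c ^ 2 + 2 * c * cos y)
        + (y - c * sin y - (1 - c ^ 2) * arctan (sin y / (c + cos y))) / c)
      (log (1 + c ^ 2 + 2 * c * cos y) * cos y) y := by
  have hc0 : c ≠ 0 := by rintro rfl; norm_num at hc
  have hP := (one_add_sq_add_two_mul_cos_pos hc y).ne'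
  have hlog := (((hasDerivAt_cos y).const_mul (2 * c)).const_add (1 + c ^ 2)).log hP
  have hrest := (((hasDerivAt_id' y).sub ((hasDerivAt_sin y).const_mul c)).sub
    ((hasDerivAt_arctan_sin_div_add_cos hc y).const_mul (1 - c ^ 2))).div_const c
  refine ((hasDerivAt_sin y).mul hlog |>.add hrest).congr_deriv ?_
  set P := 1 + c ^ 2 + 2 * c * cos y with hP_def
  field_simp
  linear_combination (-2 * c ^ 2) * sin_sq_add_cos_sq y + hP_def

lemma continuous_log_one_add_sq_add_two_mul_cos_mul_cos (hc : 1 < |c|) :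
    Continuous fun y => log (1 + c ^ 2 + 2 * c * cos y) * cos y := by
  fun_prop (disch := exact fun y => (one_add_sq_add_two_mul_cos_pos hc y).ne')

theorem integral_log_one_add_sq_add_two_mul_cos_mul_cos (hc : 1 < |c|) :
    ∫ y in (0 : ℝ)..2 * π, log (1 + c ^ 2 + 2 * c * cos y) * cos y = 2 * π / c := by
  rw [intervalIntegral.integral_eq_sub_of_hasDerivAt
    (fun y _ => hasDerivAt_log_one_add_sq_add_two_mul_cos_mul_cos hc y)
    ((continuous_log_one_add_sq_add_two_mul_cos_mul_cos hc).intervalIntegrable _ _)]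
  simp

end CosKernel

theorem integral_log_kernel_cos (r : ℝ) (hr0 : 0 < r) (hr1 : r < 1) :
    ∫ y in (0:ℝ)..(2 * π),
        Real.log ((1 + r ^ 2) + (r ^ 2 - 1) * Real.cos y) * Real.cos y
      = -(2 * π) * (1 - r) / (1 + r) := by
  have hr : 0 < 1 - r := by linarith
  set c := -(1 + r) / (1 - r) with hc_def
  have hc : 1 < |c| := by
    rw [hc_def, abs_div, abs_neg, abs_of_pos hr, abs_of_pos (by linarith), one_lt_div hr]
    linarith
  have hk : 0 < (1 - r) ^ 2 / 2 := by positivity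
  have hscale (y : ℝ) :
      (1 + r ^ 2) + (r ^ 2 - 1) * cos y = (1 - r) ^ 2 / 2 * (1 + c ^ 2 + 2 * c * cos y) := by
    rw [hc_def]
    field_simp
    ring
  have hlog_mul (y : ℝ) : log ((1 + r ^ 2) + (r ^ 2 - 1) * cos y) * cos y
      = log ((1 - r) ^ 2 / 2) * cos y + log (1 + c ^ 2 + 2 * c * cos y) * cos y := by
    rw [hscale, log_mul hk.ne' (one_add_sq_add_two_mul_cos_pos hc y).ne', add_mul]
  simp only [hlog_mul]
  rw [intervalIntegral.integral_add ((by fun_prop : Continuous _).intervalIntegrable _ _)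
      ((continuous_log_one_add_sq_add_two_mul_cos_mul_cos hc).intervalIntegrable _ _),
    intervalIntegral.integral_const_mul, integral_cos, sin_two_pi, sin_zero, sub_self,
    mul_zero, zero_add, integral_log_one_add_sq_add_two_mul_cos_mul_cos hc, hc_def]
  field_simp
end

section
/- For every integer k ≥ 3, there exists a unique real r with 0 < r < 1 such that −1 − 2r + 2kr − r² − (1−r)^k/(1+r)^{k−2} = 0. -/
theorem exists_unique_root (k : ℕ) (hk : 3 ≤ k) :
    ∃! r : ℝ, 0 < r ∧ r < 1 ∧
      -1 - 2 * r + 2 * k * r - r ^ 2 - (1 - r) ^ k / (1 + r) ^ (k - 2) = 0 := by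
  set g : ℝ → ℝ := fun r => -1 - 2 * r + 2 * k * r - r ^ 2 - (1 - r) ^ k / (1 + r) ^ (k - 2)
    with hg
  have hk3 : (3 : ℝ) ≤ (k : ℝ) := by exact_mod_cast hk
  -- strict monotonicity on Icc 0 1
  have hmono : StrictMonoOn g (Set.Icc (0 : ℝ) 1) := by
    intro a ha b hb hab
    simp only [Set.mem_Icc] at ha hb
    have hfa : (1 - b) ^ k / (1 + b) ^ (k - 2) ≤ (1 - a) ^ k / (1 + a) ^ (k - 2) := by
      apply div_le_div₀ (pow_nonneg (by linarith) k)
      · exact pow_le_pow_left₀ (by linarith) (by linarith) k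
      · exact pow_pos (by linarith) _
      · exact pow_le_pow_left₀ (by linarith) (by linarith) _
    have hpoly : -1 - 2 * a + 2 * k * a - a ^ 2 < -1 - 2 * b + 2 * k * b - b ^ 2 := by
      nlinarith [mul_pos (sub_pos.2 hab) (by nlinarith : (0:ℝ) < 2 * k - 2 - (a + b))]
    simp only [hg]
    linarith
  have hcont : ContinuousOn g (Set.Icc (0 : ℝ) 1) := by
    apply ContinuousOn.sub (by fun_prop)
    apply ContinuousOn.div (by fun_prop) (by fun_prop)
    intro x hx
    have := hx.1
    positivity
  have hg0 : g 0 = -2 := by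
    simp [hg]; norm_num
  have hg1 : g 1 = 2 * k - 4 := by
    have hk0 : k ≠ 0 := by omega
    simp [hg, zero_pow hk0]
    ring
  have h0 : g 0 < 0 := by rw [hg0]; norm_num
  have h1 : 0 < g 1 := by rw [hg1]; linarith
  have hivt := intermediate_value_Ioo (by norm_num : (0:ℝ) ≤ 1) hcont
  have hmem : (0 : ℝ) ∈ Set.Ioo (g 0) (g 1) := ⟨h0, h1⟩
  obtain ⟨r, hr, hgr⟩ := hivt hmem
  refine ⟨r, ⟨hr.1, hr.2, hgr⟩, ?_⟩
  rintro s ⟨hs0, hs1, hgs⟩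
  have hrmem : r ∈ Set.Icc (0:ℝ) 1 := ⟨hr.1.le, hr.2.le⟩
  have hsmem : s ∈ Set.Icc (0:ℝ) 1 := ⟨hs0.le, hs1.le⟩
  exact hmono.injOn hsmem hrmem (hgs.trans hgr.symm)
end

section
/- For every integer k ≥ 3, the unique root r(k) ∈ (0,1) of B_k(r) = −1 − 2r + 2kr − r² − (1−r)^k/(1+r)^{k−2} is a simple root, i.e., B_k'(r(k)) ≠ 0. -/
/-!
The polynomial part of `B_k` has derivative `2k - 2 - 2r > 0` on `(0, 1)`, while the subtracted
quotient `(1 - s)^k / (1 + s)^(k-2)` is antitone there (decreasing numerator, increasing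
denominator), so `B_k' > 0` on all of `(0, 1)`, in particular at its root.
-/

lemma antitoneOn_one_sub_pow_div_one_add_pow (k m : ℕ) :
    AntitoneOn (fun s : ℝ => (1 - s) ^ k / (1 + s) ^ m) (Set.Ioc (-1) 1) := by
  rintro a ⟨ha₀, -⟩ b ⟨-, hb₁⟩ hab
  exact div_le_div₀ (pow_nonneg (by linarith) k) (pow_le_pow_left₀ (by linarith) (by linarith) k)
    (pow_pos (by linarith) m) (pow_le_pow_left₀ (by linarith) (by linarith) m)

lemma deriv_one_sub_pow_div_one_add_pow_nonpos (k m : ℕ) {r : ℝ} (hr₀ : -1 < r) (hr₁ : r < 1) :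
    deriv (fun s : ℝ => (1 - s) ^ k / (1 + s) ^ m) r ≤ 0 := by
  rw [← derivWithin_of_isOpen isOpen_Ioo ⟨hr₀, hr₁⟩]
  exact ((antitoneOn_one_sub_pow_div_one_add_pow k m).mono
    Set.Ioo_subset_Ioc_self).derivWithin_nonpos

theorem root_is_simple_general (k : ℕ) (hk : 3 ≤ k) (r : ℝ) (hr0 : 0 < r) (hr1 : r < 1) :
    deriv (fun s : ℝ =>
      -1 - 2 * s + 2 * k * s - s ^ 2 - (1 - s) ^ k / (1 + s) ^ (k - 2)) r ≠ 0 := by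
  have hpoly : HasDerivAt (fun s : ℝ => -1 - 2 * s + 2 * k * s - s ^ 2) (2 * k - 2 - 2 * r) r :=
    ((((hasDerivAt_const r (-1 : ℝ)).sub ((hasDerivAt_id' r).const_mul 2)).add
      ((hasDerivAt_id' r).const_mul (2 * k : ℝ))).sub (hasDerivAt_pow 2 r)).congr_deriv
      (by norm_num; ring)
  have hquot : DifferentiableAt ℝ (fun s : ℝ => (1 - s) ^ k / (1 + s) ^ (k - 2)) r := by
    fun_prop (disch := exact pow_ne_zero _ (by linarith))
  have hquot_deriv := deriv_one_sub_pow_div_one_add_pow_nonpos k (k - 2) (by linarith) hr1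
  have hk' : (3 : ℝ) ≤ k := by exact_mod_cast hk
  rw [deriv_fun_sub hpoly.differentiableAt hquot, hpoly.deriv]
  linarith

theorem root_is_simple (k : ℕ) (hk : 3 ≤ k) (r : ℝ) (hr0 : 0 < r) (hr1 : r < 1)
    (hroot : -1 - 2 * r + 2 * k * r - r ^ 2 - (1 - r) ^ k / (1 + r) ^ (k - 2) = 0) :
    deriv (fun s : ℝ =>
      -1 - 2 * s + 2 * k * s - s ^ 2 - (1 - s) ^ k / (1 + s) ^ (k - 2)) r ≠ 0 :=
  root_is_simple_general k hk r hr0 hr1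
end

section
/- For every fixed r ∈ (0,1), the function k ↦ −1 − 2r + 2kr − r² − (1−r)^k/(1+r)^{k−2} is strictly increasing in the real variable k; consequently, if k₁ > k₂ ≥ 3 are integers, then the unique roots satisfy r(k₁) < r(k₂). -/
/-!
Writing `q = (1 - r) / (1 + r) ∈ (0, 1)`, the bracket is `2 k r - (1 + r)² q ^ k` plus terms free
of `k`, hence strictly increasing in `k`. For `k ≥ 2` it is also strictly increasing in `r` on
`(-1, 1]`: the quadratic part increases and `(1 - r) ^ k / (1 + r) ^ (k - 2)` decreases. So if
`k₂ < k₁`, then `B(k₂, r₁) < B(k₁, r₁) = 0 = B(k₂, r₂)` forces `r₁ < r₂`.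
-/

open Real

noncomputable def bracket (k r : ℝ) : ℝ :=
  -1 - 2 * r + 2 * k * r - r ^ 2 - (1 - r) ^ k / (1 + r) ^ (k - 2)

lemma rpow_div_rpow_sub_two {r : ℝ} (hr₀ : -1 < r) (hr₁ : r ≤ 1) (k : ℝ) :
    (1 - r) ^ k / (1 + r) ^ (k - 2) = ((1 - r) / (1 + r)) ^ k * (1 + r) ^ 2 := by
  have hpos : 0 < 1 + r := by linarith
  rw [rpow_sub hpos, div_rpow (by linarith) hpos.le, rpow_two]
  field_simp

lemma bracket_natCast {n : ℕ} (hn : 2 ≤ n) (r : ℝ) :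
    bracket n r = -1 - 2 * r + 2 * n * r - r ^ 2 - (1 - r) ^ n / (1 + r) ^ (n - 2) := by
  have hcast : ((n - 2 : ℕ) : ℝ) = (n : ℝ) - 2 := by push_cast [Nat.cast_sub hn]; ring
  rw [bracket, ← hcast, rpow_natCast, rpow_natCast]

lemma strictMono_bracket {r : ℝ} (hr₀ : 0 < r) (hr₁ : r < 1) :
    StrictMono (fun k ↦ bracket k r) := by
  intro a b hab
  have hq₀ : 0 < (1 - r) / (1 + r) := div_pos (by linarith) (by linarith)
  have hq₁ : (1 - r) / (1 + r) < 1 := (div_lt_one (by linarith)).2 (by linarith)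
  have hpow : ((1 - r) / (1 + r)) ^ b ≤ ((1 - r) / (1 + r)) ^ a :=
    (rpow_lt_rpow_of_exponent_gt hq₀ hq₁ hab).le
  have hsq : 0 < (1 + r) ^ 2 := by positivity
  simp only [bracket, rpow_div_rpow_sub_two (by linarith) hr₁.le]
  nlinarith [mul_le_mul_of_nonneg_right hpow hsq.le]

lemma strictMonoOn_bracket {k : ℝ} (hk : 2 ≤ k) :
    StrictMonoOn (bracket k) (Set.Ioc (-1) 1) := by
  rintro x ⟨hx₀, hx₁⟩ y ⟨hy₀, hy₁⟩ hxy
  have hnum : (1 - y) ^ k ≤ (1 - x) ^ k := rpow_le_rpow (by linarith) (by linarith) (by linarith)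
  have hden : (1 + x) ^ (k - 2) ≤ (1 + y) ^ (k - 2) :=
    rpow_le_rpow (by linarith) (by linarith) (by linarith)
  have hquot : (1 - y) ^ k / (1 + y) ^ (k - 2) ≤ (1 - x) ^ k / (1 + x) ^ (k - 2) :=
    div_le_div₀ (rpow_nonneg (by linarith) _) hnum (rpow_pos_of_pos (by linarith) _) hden
  have hquad : -1 - 2 * x + 2 * k * x - x ^ 2 < -1 - 2 * y + 2 * k * y - y ^ 2 := by
    nlinarith [mul_pos (sub_pos.2 hxy) (show 0 < 2 * k - 2 - (x + y) by linarith)]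
  simp only [bracket]
  linarith

lemma lt_of_bracket_eq_zero {k₁ k₂ r₁ r₂ : ℝ} (hk₂ : 2 ≤ k₂) (hk : k₂ < k₁)
    (hr₁₀ : 0 < r₁) (hr₁₁ : r₁ < 1) (hr₂₀ : -1 < r₂) (hr₂₁ : r₂ ≤ 1)
    (h₁ : bracket k₁ r₁ = 0) (h₂ : bracket k₂ r₂ = 0) : r₁ < r₂ := by
  have hlt : bracket k₂ r₁ < bracket k₂ r₂ := by
    rw [h₂, ← h₁]
    exact strictMono_bracket hr₁₀ hr₁₁ hk
  exact (strictMonoOn_bracket hk₂).lt_iff_lt ⟨by linarith, hr₁₁.le⟩ ⟨hr₂₀, hr₂₁⟩ |>.1 hlt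

theorem bracket_strict_mono_in_k (r : ℝ) (hr0 : 0 < r) (hr1 : r < 1) :
    (StrictMono (fun k : ℝ =>
      -1 - 2 * r + 2 * k * r - r ^ 2 - (1 - r) ^ k / (1 + r) ^ (k - 2))) ∧
    (∀ k₁ k₂ : ℕ, 3 ≤ k₂ → k₂ < k₁ → ∀ r₁ r₂ : ℝ,
      0 < r₁ → r₁ < 1 → 0 < r₂ → r₂ < 1 →
      -1 - 2 * r₁ + 2 * k₁ * r₁ - r₁ ^ 2 - (1 - r₁) ^ k₁ / (1 + r₁) ^ (k₁ - 2) = 0 →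
      -1 - 2 * r₂ + 2 * k₂ * r₂ - r₂ ^ 2 - (1 - r₂) ^ k₂ / (1 + r₂) ^ (k₂ - 2) = 0 →
      r₁ < r₂) := by
  refine ⟨strictMono_bracket hr0 hr1, ?_⟩
  intro k₁ k₂ hk₂ hk r₁ r₂ hr₁₀ hr₁₁ hr₂₀ hr₂₁ h₁ h₂
  rw [← bracket_natCast (by omega)] at h₁ h₂
  exact lt_of_bracket_eq_zero (by exact_mod_cast (by omega : 2 ≤ k₂)) (by exact_mod_cast hk)
    hr₁₀ hr₁₁ (by linarith) hr₂₁.le h₁ h₂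
end
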